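/- arXiv:2501.16575 — 2 statements merged into one kernel-verified Lean document; each statement's English description precedes it below -/
import Mathlib

section
/- Define β̃_e = β/(1 + κ·(β/β_b - 1)). In the deterministic steady state, the Lagrange multiplier on the collateral constraint satisfies λ^e = (U^e_C/R^L)·(1 - β_e/β̃_e), where R^L = (1 - (1-κ)·(1 - β_b/β))/β_b. Hence λ^e > 0 if and only if β_e < β̃_e. -/
/-! Rewritten as `Rᴸ = (1 + κ (β/β_b - 1))/β`, the loan rate is the reciprocal of the threshold `β̃_e`.
The entrepreneur's Euler equation then reads `λᵉ = (Uᵉ_C/Rᴸ)(1 - β_e Rᴸ)`, whose sign is that of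
`β̃_e - β_e`. -/

lemma one_add_mul_div_sub_one_pos {β βb κ : ℝ} (hβb0 : 0 < βb) (hβbβ : βb ≤ β) (hκ0 : 0 ≤ κ) :
    0 < 1 + κ * (β / βb - 1) := by
  have : 0 ≤ β / βb - 1 := sub_nonneg.mpr ((one_le_div hβb0).mpr hβbβ)
  positivity

lemma loan_rate_eq {β βb κ : ℝ} (hβ : β ≠ 0) (hβb : βb ≠ 0) :
    (1 - (1 - κ) * (1 - βb / β)) / βb = (1 + κ * (β / βb - 1)) / β := by
  field_simp
  ring

lemma multiplier_eq_of_euler {U βe m R : ℝ} (hR : R ≠ 0) (h : U = βe * U * R + m * R) :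
    m = U / R * (1 - βe / R⁻¹) := by
  rw [div_inv_eq_mul]
  field_simp
  linarith

lemma multiplier_pos_iff {U βe R : ℝ} (hU : 0 < U) (hR : 0 < R) :
    0 < U / R * (1 - βe / R⁻¹) ↔ βe < R⁻¹ := by
  rw [mul_pos_iff_of_pos_left (div_pos hU hR), sub_pos, div_lt_one (inv_pos.mpr hR)]

theorem steady_state_collateral_multiplier_general
    (β βb βe κ UeC lame RL : ℝ)
    (hβ0 : 0 < β) (hβb0 : 0 < βb) (hβbβ : βb ≤ β)
    (hκ0 : 0 ≤ κ)
    (hUeC : 0 < UeC)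
    (hRL : RL = (1 - (1 - κ) * (1 - βb / β)) / βb)
    (hlame : UeC = βe * UeC * RL + lame * RL) :
    lame = (UeC / RL) * (1 - βe / (β / (1 + κ * (β / βb - 1)))) ∧
      (0 < lame ↔ βe < β / (1 + κ * (β / βb - 1))) := by
  have hRL_inv : RL⁻¹ = β / (1 + κ * (β / βb - 1)) := by
    rw [hRL, loan_rate_eq hβ0.ne' hβb0.ne', inv_div]
  have hRL_pos : 0 < RL := by
    rw [← inv_pos, hRL_inv]
    exact div_pos hβ0 (one_add_mul_div_sub_one_pos hβb0 hβbβ hκ0)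
  have hlame_eq := multiplier_eq_of_euler hRL_pos.ne' hlame
  rw [← hRL_inv]
  exact ⟨hlame_eq, hlame_eq ▸ multiplier_pos_iff hUeC hRL_pos⟩

/-- Steady-state multiplier on the collateral constraint:
`λᵉ = (Uᵉ_C / Rᴸ)(1 - β_e/β̃_e)`, positive iff `β_e < β̃_e`. -/
theorem steady_state_collateral_multiplier
    (β βb βe κ UbC UeC lamb lame RL : ℝ)
    (hβ0 : 0 < β) (hβ1 : β < 1) (hβb0 : 0 < βb) (hβbβ : βb ≤ β)
    (hβe0 : 0 < βe) (hβe1 : βe < 1) (hκ0 : 0 ≤ κ) (hκ1 : κ < 1)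
    (hUbC : 0 < UbC) (hUeC : 0 < UeC)
    (hlamb : lamb = UbC * (1 - βb / β))
    (hRLeuler : UbC = βb * RL * UbC + lamb * (1 - κ))
    (hRL : RL = (1 - (1 - κ) * (1 - βb / β)) / βb)
    (hlame : UeC = βe * UeC * RL + lame * RL) :
    lame = (UeC / RL) * (1 - βe / (β / (1 + κ * (β / βb - 1)))) ∧
      (0 < lame ↔ βe < β / (1 + κ * (β / βb - 1))) :=
  steady_state_collateral_multiplier_general β βb βe κ UeC lame RL hβ0 hβb0 hβbβ hκ0 hUeC hRL hlame
end

section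
/- With separable worker utility U^w(C,N) = u(C) - v(N), zero steady-state capital-producer profits (so C^w = W·N + (R-1)·D), and slack constraints (λ^e = λ^L = 0), the planner's steady-state FOC for worker consumption 0 = ω_w·u'(C^w) - λ^Y + λ^C·(u''(C^w)/u'(C^w))·C^w together with ω_b·U^b_C = ω_e·U^e_C = λ^Y + λ^C implies: ω_w·u'(C^w) = λ^Y + λ^C holds if and only if -C^w·u''(C^w)/u'(C^w) = 1. In particular, for u with constant relative risk aversion γ (u'(C) = C^{-γ}), full Pareto-weighted marginal-utility equalization across all three agents holds if and only if γ = 1, i.e., u is logarithmic. -/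
/-! The worker FOC reads `ωw u'(Cw) = λY + λC · ρ` with `ρ = -Cw u''(Cw) / u'(Cw)` the relative
risk aversion, so the worker's weighted marginal utility meets the common value `λY + λC` of the
other two agents exactly when `ρ = 1`; for CRRA utility `ρ = γ`. -/

theorem weighted_marginal_utility_eq_iff_of_foc {ωw lamY lamC Cw up upp : ℝ} (hlamC : lamC ≠ 0)
    (hFOC : 0 = ωw * up - lamY + lamC * (upp / up) * Cw) :
    ωw * up = lamY + lamC ↔ -Cw * upp / up = 1 := by
  have hworker : ωw * up = lamY + lamC * (-Cw * upp / up) := by linear_combination -hFOC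
  rw [hworker, add_right_inj, mul_eq_left₀ hlamC]

theorem crra_relative_risk_aversion {C : ℝ} (hC : 0 < C) (γ : ℝ) :
    -C * (-γ * C ^ (-γ - 1)) / C ^ (-γ) = γ := by
  rw [Real.rpow_sub_one hC.ne']
  field_simp [(Real.rpow_pos_of_pos hC (-γ)).ne']

theorem full_risk_sharing_iff_log_general
    (ωw lamY lamC Cw γ up upp : ℝ)
    (hlamC : 0 < lamC) (hCw : 0 < Cw)
    (hFOC : 0 = ωw * up - lamY + lamC * (upp / up) * Cw)
    (hupv : up = Cw ^ (-γ)) (huppv : upp = -γ * Cw ^ (-γ - 1)) :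
    (ωw * up = lamY + lamC ↔ -Cw * upp / up = 1) ∧
      (ωw * up = lamY + lamC ↔ γ = 1) := by
  have hequal := weighted_marginal_utility_eq_iff_of_foc hlamC.ne' hFOC
  have hrra : -Cw * upp / up = γ := by
    rw [hupv, huppv]
    exact crra_relative_risk_aversion hCw γ
  exact ⟨hequal, hrra ▸ hequal⟩

/-- Approximate perfect risk sharing (Proposition 1, part 2): full
Pareto-weighted marginal-utility equalization holds iff relative risk
aversion equals one, i.e., utility is logarithmic. -/
theorem full_risk_sharing_iff_log
    (ωb ωe ωw lamY lamC Cw UbC UeC γ up upp : ℝ)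
    (hωb : 0 < ωb) (hωe : 0 < ωe) (hωw : 0 < ωw)
    (hlamY : 0 < lamY) (hlamC : 0 < lamC) (hCw : 0 < Cw)
    (hup : 0 < up) (hupp : upp < 0) (hγ : 0 < γ)
    (hFOC : 0 = ωw * up - lamY + lamC * (upp / up) * Cw)
    (hb : ωb * UbC = lamY + lamC) (he : ωe * UeC = lamY + lamC)
    (hupv : up = Cw ^ (-γ)) (huppv : upp = -γ * Cw ^ (-γ - 1)) :
    (ωw * up = lamY + lamC ↔ -Cw * upp / up = 1) ∧
      (ωw * up = lamY + lamC ↔ γ = 1) :=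
  full_risk_sharing_iff_log_general ωw lamY lamC Cw γ up upp hlamC hCw hFOC hupv huppv
end
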